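/- Let z ∈ ℂ_p with |z−1|_p ≥ 1 and k ≥ 1, and let μ_{k,z} be the twisted Bernoulli measure. Then ∫_{ℤ_p} 1 dμ_{k,z} = β_k(z), i.e. lim_{N→∞} Σ_{a=0}^{p^N−1} p^{N(k−1)} z^a β_k(a/p^N, z^{p^N}) = β_k(0, z). -/

import Mathlib

/-- The twisted Bernoulli polynomial `β_k(x,y)`, defined (for `y ≠ 1`) by the
exponential generating function `t·e^{xt}/(y·e^t − 1) = Σ_{k≥0} β_k(x,y) t^k/k!`. -/
noncomputable def twistedBernoulli {K : Type*} [Field K] [CharZero K] (k : ℕ) (x y : K) : K :=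
  (k.factorial : K) *
    PowerSeries.coeff k
      (PowerSeries.X * PowerSeries.rescale x (PowerSeries.exp K) *
        (PowerSeries.C y * PowerSeries.exp K - 1)⁻¹)

open Filter

/-!
The Riemann sums are constant in `N`. For `n ≥ 1`, `z ≠ 1` and `z ^ n ≠ 1` the distribution
relation `∑_{a<n} n^(k-1) z^a β_k(a/n, z^n) = β_k(z)` holds: after `t ↦ n t`, the generating
functions of the left side sum to `n t (z e^t)^a / ((z e^t)^n - 1)` over `a < n`, and the
geometric sum turns this into `n t / (z e^t - 1)`. Taking `n = p^N`, it remains to see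
`z ^ p ^ N ≠ 1`: since `z^p - 1 ≡ (z - 1)^p` modulo `p` and `|p| < 1`, the condition
`|z - 1| ≥ 1` gives `|z^p - 1| = |z - 1|^p ≥ 1`, and this propagates to all `p`-power exponents.
-/

namespace PowerSeries

section CommSemiring

variable {R : Type*} [CommSemiring R]

theorem constantCoeff_rescale (c : R) (f : R⟦X⟧) :
    constantCoeff (rescale c f) = constantCoeff f := by
  rw [← coeff_zero_eq_constantCoeff_apply, coeff_rescale, pow_zero, one_mul,
    coeff_zero_eq_constantCoeff_apply]

theorem rescale_C (c d : R) : rescale c (C d) = C d := by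
  ext n; cases n <;> simp [coeff_rescale, coeff_C]

end CommSemiring

section Field

variable {k : Type*} [Field k]

theorem rescale_inv (c : k) {f : k⟦X⟧} (hf : constantCoeff f ≠ 0) :
    rescale c f⁻¹ = (rescale c f)⁻¹ := by
  rw [PowerSeries.eq_inv_iff_mul_eq_one (by rwa [constantCoeff_rescale]), ← map_mul,
    PowerSeries.inv_mul_cancel f hf, map_one]

theorem geom_sum_eq_mul_inv {f : k⟦X⟧} (hf : constantCoeff f ≠ 1) (n : ℕ) :
    ∑ a ∈ Finset.range n, f ^ a = (f ^ n - 1) * (f - 1)⁻¹ := by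
  rw [← geom_sum_mul, mul_assoc, PowerSeries.mul_inv_cancel _ (by simpa [sub_eq_zero] using hf),
    mul_one]

end Field

end PowerSeries

section TwistedBernoulli

open PowerSeries

variable {K : Type*} [Field K] [CharZero K]

noncomputable def twistedBernoulliGenFun (x y : K) : K⟦X⟧ :=
  X * rescale x (exp K) * (C y * exp K - 1)⁻¹

theorem twistedBernoulli_eq_factorial_mul_coeff (k : ℕ) (x y : K) :
    twistedBernoulli k x y = k.factorial * coeff k (twistedBernoulliGenFun x y) :=
  rfl

theorem twistedBernoulli_zero (x y : K) : twistedBernoulli 0 x y = 0 := by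
  simp [twistedBernoulli_eq_factorial_mul_coeff, twistedBernoulliGenFun, mul_assoc]

theorem rescale_twistedBernoulliGenFun {n : ℕ} (hn : n ≠ 0) (a : ℕ) {y : K} (hy : y ≠ 1) :
    rescale (n : K) (twistedBernoulliGenFun (a / n) y) =
      C (n : K) * X * exp K ^ a * (C y * exp K ^ n - 1)⁻¹ := by
  have hc : constantCoeff (C y * exp K - 1) ≠ 0 := by
    simpa [constantCoeff_exp, sub_eq_zero] using hy
  rw [twistedBernoulliGenFun, map_mul, map_mul, rescale_X, rescale_rescale,
    div_mul_cancel₀ _ (Nat.cast_ne_zero.mpr hn), rescale_inv _ hc, map_sub, map_mul, rescale_C,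
    map_one, exp_pow_eq_rescale_exp, exp_pow_eq_rescale_exp]

theorem sum_C_mul_rescale_twistedBernoulliGenFun {n : ℕ} (hn : n ≠ 0) {z : K} (hz : z ≠ 1)
    (hzn : z ^ n ≠ 1) :
    ∑ a ∈ Finset.range n, C (z ^ a) * rescale (n : K) (twistedBernoulliGenFun (a / n) (z ^ n)) =
      C (n : K) * twistedBernoulliGenFun 0 z := by
  set q := C z * exp K
  have hq : constantCoeff q = z := by simp [q, constantCoeff_exp]
  have hterm (a : ℕ) : C (z ^ a) * rescale (n : K) (twistedBernoulliGenFun (a / n) (z ^ n)) =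
      C (n : K) * X * (q ^ n - 1)⁻¹ * q ^ a := by
    rw [rescale_twistedBernoulliGenFun hn a hzn]
    simp only [q, mul_pow, map_pow]
    ring
  have hqn : (q ^ n - 1)⁻¹ * (q ^ n - 1) = 1 :=
    PowerSeries.inv_mul_cancel _ (by simpa [hq, sub_eq_zero] using hzn)
  simp only [hterm, ← Finset.mul_sum, geom_sum_eq_mul_inv (hq ▸ hz)]
  rw [twistedBernoulliGenFun, rescale_zero]
  simp only [RingHom.comp_apply, constantCoeff_exp, map_one, mul_one]
  linear_combination (C (n : K) * X * (q - 1)⁻¹) * hqn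

theorem sum_pow_mul_twistedBernoulli {n : ℕ} (hn : n ≠ 0) {z : K} (hz : z ≠ 1)
    (hzn : z ^ n ≠ 1) (k : ℕ) :
    ∑ a ∈ Finset.range n, (n : K) ^ k * z ^ a * twistedBernoulli k ((a : K) / n) (z ^ n) =
      n * twistedBernoulli k 0 z := by
  have h := congrArg (fun f ↦ (k.factorial : K) * coeff k f)
    (sum_C_mul_rescale_twistedBernoulliGenFun hn hz hzn)
  simp only [map_sum, coeff_C_mul, coeff_rescale, Finset.mul_sum] at h
  simp only [twistedBernoulli_eq_factorial_mul_coeff]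
  convert h using 1
  · exact Finset.sum_congr rfl fun _ _ ↦ by ring
  · ring

theorem sum_pow_pred_mul_twistedBernoulli {n : ℕ} (hn : n ≠ 0) {z : K} (hz : z ≠ 1)
    (hzn : z ^ n ≠ 1) (k : ℕ) :
    ∑ a ∈ Finset.range n, (n : K) ^ (k - 1) * z ^ a * twistedBernoulli k ((a : K) / n) (z ^ n) =
      twistedBernoulli k 0 z := by
  -- `k - 1` truncates at `k = 0`, where both sides vanish.
  cases k with
  | zero => simp [twistedBernoulli_zero]
  | succ k =>
    refine mul_left_cancel₀ (Nat.cast_ne_zero.mpr hn : (n : K) ≠ 0) ?_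
    rw [← sum_pow_mul_twistedBernoulli hn hz hzn, Finset.mul_sum, Nat.add_sub_cancel]
    exact Finset.sum_congr rfl fun _ _ ↦ by ring

end TwistedBernoulli

section Ultrametric

open IsUltrametricDist

variable {K : Type*} [NormedField K] [IsUltrametricDist K]

theorem norm_add_pow_prime_sub_pow_sub_pow_le {R : Type*} [SeminormedCommRing R] [NormOneClass R]
    [IsUltrametricDist R] {p : ℕ} (hp : p.Prime) (x y : R) :
    ‖(x + y) ^ p - x ^ p - y ^ p‖ ≤ ‖(p : R)‖ * max ‖x‖ ‖y‖ ^ p := by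
  rw [add_pow_prime_eq' hp, add_assoc, add_sub_cancel_left, add_sub_cancel_left]
  refine (norm_mul_le _ _).trans (mul_le_mul_of_nonneg_left ?_ (norm_nonneg _))
  refine norm_sum_le_of_forall_le_of_nonneg (by positivity) fun k hk ↦ ?_
  have hkp : k ≤ p := (Finset.mem_Ioo.mp hk).2.le
  calc ‖x ^ k * y ^ (p - k) * ((p.choose k / p : ℕ) : R)‖
      ≤ ‖x‖ ^ k * ‖y‖ ^ (p - k) * 1 := by
        refine (norm_mul_le _ _).trans (mul_le_mul ((norm_mul_le _ _).trans ?_)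
          (norm_natCast_le_one R _) (norm_nonneg _) (by positivity))
        exact mul_le_mul (norm_pow_le _ _) (norm_pow_le _ _) (norm_nonneg _) (by positivity)
    _ ≤ max ‖x‖ ‖y‖ ^ k * max ‖x‖ ‖y‖ ^ (p - k) * 1 := by
        gcongr
        exacts [le_max_left _ _, le_max_right _ _]
    _ = max ‖x‖ ‖y‖ ^ p := by rw [mul_one, ← pow_add, Nat.add_sub_cancel' hkp]

theorem norm_pow_prime_sub_one {p : ℕ} (hp : p.Prime) (hp1 : ‖(p : K)‖ < 1) {z : K}
    (hz : 1 ≤ ‖z - 1‖) :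
    ‖z ^ p - 1‖ = ‖z - 1‖ ^ p := by
  set w := z - 1
  have hw : 1 ≤ ‖w ^ p‖ := norm_pow w p ▸ one_le_pow₀ hz
  have hE : ‖(w + 1) ^ p - w ^ p - 1 ^ p‖ < ‖w ^ p‖ := by
    calc _ ≤ ‖(p : K)‖ * max ‖w‖ ‖(1 : K)‖ ^ p :=
          norm_add_pow_prime_sub_pow_sub_pow_le hp w 1
      _ = ‖(p : K)‖ * ‖w ^ p‖ := by rw [norm_one, max_eq_left hz, norm_pow]
      _ < ‖w ^ p‖ := mul_lt_of_lt_one_left (one_pos.trans_le hw) hp1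
  have hsplit : z ^ p - 1 = w ^ p + ((w + 1) ^ p - w ^ p - 1 ^ p) := by
    simp only [w]; ring
  rw [hsplit, norm_add_eq_max_of_norm_ne_norm hE.ne', max_eq_left hE.le, norm_pow]

theorem norm_pow_prime_pow_sub_one {p : ℕ} (hp : p.Prime) (hp1 : ‖(p : K)‖ < 1) {z : K}
    (hz : 1 ≤ ‖z - 1‖) (N : ℕ) :
    ‖z ^ p ^ N - 1‖ = ‖z - 1‖ ^ p ^ N := by
  induction N with
  | zero => simp
  | succ N ih =>
    rw [pow_succ, pow_mul, pow_mul,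
      norm_pow_prime_sub_one hp hp1 (ih ▸ one_le_pow₀ hz), ih]

end Ultrametric

theorem integral_one_twistedBernoulli_measure_general
    {K : Type*} [NormedField K] [IsUltrametricDist K] [CharZero K]
    (p : ℕ) (hp : p.Prime) (hnorm : ‖(p : K)‖ = (p : ℝ)⁻¹)
    (k : ℕ) (z : K) (hz : 1 ≤ ‖z - 1‖) :
    Tendsto (fun N : ℕ =>
        ∑ a ∈ Finset.range (p ^ N),
          (p : K) ^ (N * (k - 1)) * z ^ a *
            twistedBernoulli k ((a : K) / (p : K) ^ N) (z ^ (p ^ N)))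
      atTop (nhds (twistedBernoulli k 0 z)) := by
  have hp1 : ‖(p : K)‖ < 1 := hnorm ▸ inv_lt_one_of_one_lt₀ (by exact_mod_cast hp.one_lt)
  have hz1 : z ≠ 1 := by
    rintro rfl
    norm_num at hz
  have hzN (N : ℕ) : z ^ p ^ N ≠ 1 := by
    rw [← sub_ne_zero, ← norm_pos_iff, norm_pow_prime_pow_sub_one hp hp1 hz N]
    exact one_pos.trans_le (one_le_pow₀ hz)
  refine tendsto_const_nhds.congr fun N ↦ ?_
  rw [← sum_pow_pred_mul_twistedBernoulli (pow_ne_zero N hp.ne_zero) hz1 (hzN N) k]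
  push_cast
  simp only [pow_mul]

/-- `∫_{ℤ_p} 1 dμ_{k,z} = β_k(z)`: the Riemann sums
`Σ_{a=0}^{p^N−1} p^{N(k−1)} z^a β_k(a/p^N, z^{p^N})` converge to `β_k(0, z)`. -/
theorem integral_one_twistedBernoulli_measure
    {K : Type*} [NormedField K] [IsUltrametricDist K] [CharZero K]
    (p : ℕ) (hp : p.Prime) (hnorm : ‖(p : K)‖ = (p : ℝ)⁻¹)
    (k : ℕ) (hk : 1 ≤ k) (z : K) (hz : 1 ≤ ‖z - 1‖) :
    Tendsto (fun N : ℕ =>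
        ∑ a ∈ Finset.range (p ^ N),
          (p : K) ^ (N * (k - 1)) * z ^ a *
            twistedBernoulli k ((a : K) / (p : K) ^ N) (z ^ (p ^ N)))
      atTop (nhds (twistedBernoulli k 0 z)) :=
  integral_one_twistedBernoulli_measure_general p hp hnorm k z hz
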